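/- Let H be an hfd line set in PG(5,K) and let G₁, G₂ ∈ H be distinct coplanar lines, i.e. G₁ ≠ G₂ and dim(G₁ + G₂) = 3. Then the plane G₁ + G₂ is external to the Klein quadric H₅. -/

import Mathlib

/-- The Klein quadratic form on `K^6`. -/
def kleinQ {K : Type*} [Field K] (x : Fin 6 → K) : K :=
  x 0 * x 1 + x 2 * x 3 + x 4 * x 5

/-- The polar bilinear form `B(x,y) = Q(x+y) - Q(x) - Q(y)`. -/
def kleinB {K : Type*} [Field K] (x y : Fin 6 → K) : K :=
  kleinQ (x + y) - kleinQ x - kleinQ y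

/-- The polar subspace `π₅(S)` of a subspace `S`. -/
def kleinPolar {K : Type*} [Field K] (S : Submodule K (Fin 6 → K)) :
    Submodule K (Fin 6 → K) where
  carrier := {y | ∀ s ∈ S, kleinB s y = 0}
  add_mem' := by
    intro a b ha hb s hs
    have h1 := ha s hs
    have h2 := hb s hs
    simp only [kleinB, kleinQ, Pi.add_apply] at *
    linear_combination h1 + h2
  zero_mem' := by
    intro s hs
    simp [kleinB, kleinQ]
  smul_mem' := by
    intro c a ha s hs
    have h1 := ha s hs
    simp only [kleinB, kleinQ, Pi.add_apply, Pi.smul_apply, smul_eq_mul] at *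
    linear_combination c * h1

/-- `τ` is a tangent hyperplane of the Klein quadric. -/
def IsTangentHyperplane {K : Type*} [Field K] (τ : Submodule K (Fin 6 → K)) : Prop :=
  ∃ x : Fin 6 → K, x ≠ 0 ∧ kleinQ x = 0 ∧ τ = kleinPolar (Submodule.span K {x})

/-- A subspace is external to the Klein quadric. -/
def IsExternal {K : Type*} [Field K] (S : Submodule K (Fin 6 → K)) : Prop :=
  ∀ s ∈ S, s ≠ 0 → kleinQ s ≠ 0

/-- A `0`-secant of the Klein quadric: an external line. -/
def IsSecant {K : Type*} [Field K] (G : Submodule K (Fin 6 → K)) : Prop :=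
  Module.finrank K G = 2 ∧ IsExternal G

/-- The pencil of lines with vertex `v` and carrier plane `κ`. -/
def pencil {K : Type*} [Field K] (v κ : Submodule K (Fin 6 → K)) :
    Set (Submodule K (Fin 6 → K)) :=
  {X | Module.finrank K X = 2 ∧ v ≤ X ∧ X ≤ κ}

/-- An hfd line set: a set of `0`-secants such that every tangent hyperplane
contains exactly one member. -/
def IsHfd {K : Type*} [Field K] (H : Set (Submodule K (Fin 6 → K))) : Prop :=
  (∀ G ∈ H, IsSecant G) ∧
    ∀ τ : Submodule K (Fin 6 → K), IsTangentHyperplane τ → ∃! G, G ∈ H ∧ G ≤ τ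

/-- A pencilled hfd line set: every member lies in a pencil entirely contained in `H`. -/
def IsPencilledHfd {K : Type*} [Field K] (H : Set (Submodule K (Fin 6 → K))) : Prop :=
  IsHfd H ∧
    ∀ G ∈ H, ∃ v κ : Submodule K (Fin 6 → K), Module.finrank K v = 1 ∧
      Module.finrank K κ = 3 ∧ v ≤ κ ∧ pencil v κ ⊆ H ∧ G ∈ pencil v κ

/-- `v` is a vertex of the pencilled hfd line set `H`. -/
def IsVertex {K : Type*} [Field K] (H : Set (Submodule K (Fin 6 → K)))
    (v : Submodule K (Fin 6 → K)) : Prop :=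
  Module.finrank K v = 1 ∧ ∃ κ : Submodule K (Fin 6 → K),
    Module.finrank K κ = 3 ∧ v ≤ κ ∧ pencil v κ ⊆ H

/-- `κ` is a carrier plane of the pencilled hfd line set `H`. -/
def IsCarrier {K : Type*} [Field K] (H : Set (Submodule K (Fin 6 → K)))
    (κ : Submodule K (Fin 6 → K)) : Prop :=
  Module.finrank K κ = 3 ∧ ∃ v : Submodule K (Fin 6 → K),
    Module.finrank K v = 1 ∧ v ≤ κ ∧ pencil v κ ⊆ H

/-!
Suppose the plane `π = G₁ + G₂` contained a singular point `s`. Both `π^⊥` and a totally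
singular plane through `s` (built from the coordinate plane `x₁ = x₃ = x₅ = 0` and `s^⊥`)
are subspaces of dimension at least 3 of the hyperplane `s^⊥`, so they share a singular
point `z`. The tangent hyperplane `z^⊥` then contains `π`, hence both `G₁` and `G₂`,
contradicting the hfd property.
-/

section

variable {K : Type*} [Field K]

lemma Submodule.finrank_add_finrank_le_finrank_inf_add_finrank_of_le {V : Type*}
    [AddCommGroup V] [Module K V] [FiniteDimensional K V] {A B N : Submodule K V}
    (hA : A ≤ N) (hB : B ≤ N) :
    Module.finrank K A + Module.finrank K B ≤
      Module.finrank K ↥(A ⊓ B) + Module.finrank K N := by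
  rw [← Submodule.finrank_sup_add_finrank_inf_eq, add_comm]
  exact Nat.add_le_add_left (Submodule.finrank_mono (sup_le hA hB)) _

lemma kleinB_apply (x y : Fin 6 → K) :
    kleinB x y = x 0 * y 1 + x 1 * y 0 + x 2 * y 3 + x 3 * y 2 + x 4 * y 5 + x 5 * y 4 := by
  simp only [kleinB, kleinQ, Pi.add_apply]; ring

lemma kleinB_comm (x y : Fin 6 → K) : kleinB x y = kleinB y x := by
  simp only [kleinB_apply]; ring

lemma kleinQ_add (x y : Fin 6 → K) : kleinQ (x + y) = kleinQ x + kleinQ y + kleinB x y := by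
  rw [kleinB]; ring

lemma kleinQ_smul (c : K) (x : Fin 6 → K) : kleinQ (c • x) = c ^ 2 * kleinQ x := by
  simp only [kleinQ, Pi.smul_apply, smul_eq_mul]; ring

lemma kleinB_smul_left (c : K) (x y : Fin 6 → K) : kleinB (c • x) y = c * kleinB x y := by
  simp only [kleinB_apply, Pi.smul_apply, smul_eq_mul]; ring

def kleinBilin : LinearMap.BilinForm K (Fin 6 → K) :=
  LinearMap.mk₂ K kleinB
    (fun _ _ _ => by simp only [kleinB_apply, Pi.add_apply]; ring)
    (fun _ _ _ => kleinB_smul_left _ _ _)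
    (fun _ _ _ => by simp only [kleinB_apply, Pi.add_apply]; ring)
    (fun _ _ _ => by simp only [kleinB_apply, Pi.smul_apply, smul_eq_mul]; ring)

@[simp] lemma kleinBilin_apply (x y : Fin 6 → K) : kleinBilin x y = kleinB x y := rfl

lemma kleinBilin_isRefl : LinearMap.IsRefl (kleinBilin (K := K)) := fun x y h => by
  rwa [kleinBilin_apply, kleinB_comm, ← kleinBilin_apply]

lemma kleinBilin_nondegenerate : (kleinBilin (K := K)).Nondegenerate := by
  refine kleinBilin_isRefl.nondegenerate_iff_separatingLeft.mpr fun x hx => ?_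
  have h : ∀ j, kleinB x (Pi.single j 1) = 0 := fun j => hx _
  funext i
  fin_cases i
  · simpa [kleinB_apply] using h 1
  · simpa [kleinB_apply] using h 0
  · simpa [kleinB_apply] using h 3
  · simpa [kleinB_apply] using h 2
  · simpa [kleinB_apply] using h 5
  · simpa [kleinB_apply] using h 4

lemma kleinPolar_eq_orthogonal (S : Submodule K (Fin 6 → K)) :
    kleinPolar S = kleinBilin.orthogonal S := rfl

lemma finrank_kleinPolar (S : Submodule K (Fin 6 → K)) :
    Module.finrank K (kleinPolar S) = 6 - Module.finrank K S := by
  rw [kleinPolar_eq_orthogonal, LinearMap.BilinForm.finrank_orthogonal kleinBilin_nondegenerate]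
  simp

lemma le_kleinPolar_comm {S T : Submodule K (Fin 6 → K)} :
    S ≤ kleinPolar T ↔ T ≤ kleinPolar S :=
  ⟨fun h t ht s hs => by rw [kleinB_comm]; exact h hs t ht,
   fun h s hs t ht => by rw [kleinB_comm]; exact h ht s hs⟩

def IsTotallySingular (T : Submodule K (Fin 6 → K)) : Prop :=
  ∀ t ∈ T, kleinQ t = 0

lemma IsTotallySingular.le_kleinPolar {T : Submodule K (Fin 6 → K)} (hT : IsTotallySingular T) :
    T ≤ kleinPolar T := fun u hu t ht => by
  rw [kleinB, hT _ (T.add_mem ht hu), hT t ht, hT u hu, sub_zero, sub_zero]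

def coordinatePlane : Submodule K (Fin 6 → K) :=
  LinearMap.ker (LinearMap.funLeft K K ![(1 : Fin 6), 3, 5])

lemma mem_coordinatePlane {x : Fin 6 → K} :
    x ∈ coordinatePlane ↔ x 1 = 0 ∧ x 3 = 0 ∧ x 5 = 0 := by
  simp [coordinatePlane, funext_iff, Fin.forall_fin_succ]

lemma isTotallySingular_coordinatePlane : IsTotallySingular (coordinatePlane (K := K)) := by
  intro x hx
  obtain ⟨h1, h3, h5⟩ := mem_coordinatePlane.mp hx
  simp [kleinQ, h1, h3, h5]

lemma finrank_coordinatePlane : Module.finrank K (coordinatePlane (K := K)) = 3 := by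
  have hsurj := LinearMap.funLeft_surjective_of_injective K K ![(1 : Fin 6), 3, 5] (by decide)
  have h := LinearMap.finrank_range_add_finrank_ker (LinearMap.funLeft K K ![(1 : Fin 6), 3, 5])
  rw [LinearMap.range_eq_top.mpr hsurj, finrank_top] at h
  simp only [Module.finrank_fin_fun] at h
  rw [coordinatePlane]
  omega

lemma finrank_kleinPolar_span_singleton {s : Fin 6 → K} (hs : s ≠ 0) :
    Module.finrank K (kleinPolar (K ∙ s)) = 5 := by
  rw [finrank_kleinPolar, finrank_span_singleton hs]

lemma IsTotallySingular.exists_mem_finrank_le {U : Submodule K (Fin 6 → K)}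
    (hU : IsTotallySingular U) {s : Fin 6 → K} (hs : kleinQ s = 0) :
    ∃ T : Submodule K (Fin 6 → K),
      s ∈ T ∧ IsTotallySingular T ∧ Module.finrank K U ≤ Module.finrank K T := by
  by_cases hsU : s ∈ U
  · exact ⟨U, hsU, hU, le_rfl⟩
  have hs0 : s ≠ 0 := fun h => hsU (h ▸ U.zero_mem)
  have hs_mem : s ∈ K ∙ s := Submodule.mem_span_singleton_self s
  refine ⟨U ⊓ kleinPolar (K ∙ s) ⊔ (K ∙ s), Submodule.mem_sup_right hs_mem, ?_, ?_⟩
  · intro t ht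
    obtain ⟨w, hw, a, ha, rfl⟩ := Submodule.mem_sup.mp ht
    obtain ⟨c, rfl⟩ := Submodule.mem_span_singleton.mp ha
    rw [kleinQ_add, kleinQ_smul, kleinB_comm, kleinB_smul_left, hs, hU w hw.1,
      hw.2 s hs_mem]
    ring
  · have hW : Module.finrank K U ≤ Module.finrank K ↥(U ⊓ kleinPolar (K ∙ s)) + 1 := by
      have := Submodule.finrank_add_finrank_le_finrank_inf_add_finrank_of_le
        (le_top : U ≤ ⊤) (le_top : kleinPolar (K ∙ s) ≤ ⊤)
      rw [finrank_kleinPolar_span_singleton hs0, finrank_top, Module.finrank_fin_fun] at this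
      omega
    have hdisj : Disjoint (U ⊓ kleinPolar (K ∙ s)) (K ∙ s) :=
      Submodule.disjoint_span_singleton_of_notMem fun h => hsU h.1
    have := Submodule.finrank_sup_add_finrank_inf_eq (U ⊓ kleinPolar (K ∙ s)) (K ∙ s)
    rw [hdisj.eq_bot, finrank_bot, finrank_span_singleton hs0] at this
    omega

lemma exists_kleinQ_eq_zero_mem_kleinPolar {S : Submodule K (Fin 6 → K)}
    (hS : Module.finrank K S ≤ 3) {s : Fin 6 → K} (hsS : s ∈ S) (hs0 : s ≠ 0)
    (hs : kleinQ s = 0) : ∃ z ∈ kleinPolar S, z ≠ 0 ∧ kleinQ z = 0 := by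
  obtain ⟨T, hsT, hT, hTrank⟩ := isTotallySingular_coordinatePlane.exists_mem_finrank_le hs
  rw [finrank_coordinatePlane] at hTrank
  have hTs : T ≤ kleinPolar (K ∙ s) :=
    le_kleinPolar_comm.mp ((Submodule.span_singleton_le_iff_mem s T).mpr hsT |>.trans
      hT.le_kleinPolar)
  have hSs : kleinPolar S ≤ kleinPolar (K ∙ s) :=
    LinearMap.BilinForm.orthogonal_le (B := kleinBilin)
      ((Submodule.span_singleton_le_iff_mem s S).mpr hsS)
  have hdim := Submodule.finrank_add_finrank_le_finrank_inf_add_finrank_of_le hTs hSs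
  rw [finrank_kleinPolar_span_singleton hs0, finrank_kleinPolar] at hdim
  have hne : T ⊓ kleinPolar S ≠ ⊥ := by
    intro h
    rw [h, finrank_bot] at hdim
    omega
  obtain ⟨z, ⟨hzT, hzS⟩, hz0⟩ := Submodule.exists_mem_ne_zero_of_ne_bot hne
  exact ⟨z, hzS, hz0, hT z hzT⟩

end

/-- Lemma 4.6.
The plane spanned by two distinct coplanar lines of an hfd line set is external to
the Klein quadric. -/
theorem plane_of_two_lines_external {K : Type*} [Field K]
    (H : Set (Submodule K (Fin 6 → K))) (hH : IsHfd H)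
    (G₁ G₂ : Submodule K (Fin 6 → K)) (h1 : G₁ ∈ H) (h2 : G₂ ∈ H)
    (hne : G₁ ≠ G₂) (hcop : Module.finrank K (G₁ ⊔ G₂ : Submodule K (Fin 6 → K)) = 3) :
    IsExternal (G₁ ⊔ G₂) := by
  intro s hs hs0 hQs
  obtain ⟨z, hz, hz0, hQz⟩ := exists_kleinQ_eq_zero_mem_kleinPolar hcop.le hs hs0 hQs
  have hτ : IsTangentHyperplane (kleinPolar (K ∙ z)) := ⟨z, hz0, hQz, rfl⟩
  have hle : G₁ ⊔ G₂ ≤ kleinPolar (K ∙ z) :=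
    le_kleinPolar_comm.mp ((Submodule.span_singleton_le_iff_mem z _).mpr hz)
  obtain ⟨G, -, huniq⟩ := hH.2 _ hτ
  exact hne ((huniq G₁ ⟨h1, le_sup_left.trans hle⟩).trans
    (huniq G₂ ⟨h2, le_sup_right.trans hle⟩).symm)
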